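/- arXiv:2405.16698 — 4 statements merged into one kernel-verified Lean document; each statement's English description precedes it below -/
import Mathlib

section
/- Let N ≥ 1, let Q > 0 be real, and let p_1, …, p_N ∈ ℝ⁴ with components p_k = (p_{0k}, p_{1k}, p_{2k}, p_{3k}) satisfy: (i) each p_k is massless, p_{0k}² = p_{1k}² + p_{2k}² + p_{3k}²; (ii) p_{0k} − p_{3k} > 0 for each k; (iii) Σ_k p_k = (Q, 0, 0, 0). Define u_k = sqrt((p_{0k} − p_{3k})/Q) ∈ ℝ and v_k = (p_{1k} + i·p_{2k}) / sqrt(Q·(p_{0k} − p_{3k})) ∈ ℂ. Then Σ_k u_k² = 1, Σ_k |v_k|² = 1, and Σ_k u_k · v_k = 0. -/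
/-!
In light-cone variables `p⁻ = p₀ - p₃`, `p⁺ = p₀ + p₃`, `p_⊥ = p₁ + i p₂`, the mass shell reads
`|p_⊥|² = p⁺ p⁻`. Hence `u_k² = p⁻_k / Q`, `|v_k|² = p⁺_k / Q` and `u_k v_k = p_⊥k / Q`, and
momentum conservation `∑ p⁻ = ∑ p⁺ = Q`, `∑ p_⊥ = 0` gives the three identities.
-/

open Finset Complex

lemma transverse_sq_eq_of_massless {p0 p1 p2 p3 : ℝ}
    (hmass : p0 ^ 2 = p1 ^ 2 + p2 ^ 2 + p3 ^ 2) :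
    p1 ^ 2 + p2 ^ 2 = (p0 + p3) * (p0 - p3) := by
  linear_combination -hmass

lemma sq_norm_div_ofReal_sqrt (z : ℂ) {c : ℝ} (hc : 0 ≤ c) :
    ‖z / (√c : ℂ)‖ ^ 2 = normSq z / c := by
  rw [norm_div, div_pow, Complex.sq_norm, norm_real, Real.norm_of_nonneg (Real.sqrt_nonneg c),
    Real.sq_sqrt hc]

lemma Real.sqrt_div_div_sqrt_mul {a Q : ℝ} (ha : 0 < a) (hQ : 0 < Q) :
    √(a / Q) / √(Q * a) = Q⁻¹ := by
  rw [← Real.sqrt_div' _ (mul_pos hQ ha).le,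
    show a / Q / (Q * a) = Q⁻¹ ^ 2 by field_simp, Real.sqrt_sq (inv_nonneg.mpr hQ.le)]

lemma ofReal_sqrt_div_mul_div_sqrt_mul (z : ℂ) {a Q : ℝ} (ha : 0 < a) (hQ : 0 < Q) :
    (√(a / Q) : ℂ) * (z / (√(Q * a) : ℂ)) = z / Q := by
  rw [mul_div_left_comm, ← ofReal_div, Real.sqrt_div_div_sqrt_mul ha hQ, ofReal_inv, div_eq_mul_inv]

theorem phase_space_coords_CM_general (N : ℕ) (Q : ℝ) (hQ : 0 < Q)
    (p0 p1 p2 p3 : Fin N → ℝ)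
    (hmass : ∀ k, (p0 k) ^ 2 = (p1 k) ^ 2 + (p2 k) ^ 2 + (p3 k) ^ 2)
    (hpos : ∀ k, 0 < p0 k - p3 k)
    (hsum0 : ∑ k, p0 k = Q) (hsum1 : ∑ k, p1 k = 0)
    (hsum2 : ∑ k, p2 k = 0) (hsum3 : ∑ k, p3 k = 0) :
    (∑ k, (Real.sqrt ((p0 k - p3 k) / Q)) ^ 2 = 1) ∧
    (∑ k, ‖((p1 k : ℂ) + (p2 k : ℂ) * Complex.I) /
        ((Real.sqrt (Q * (p0 k - p3 k)) : ℝ) : ℂ)‖ ^ 2 = 1) ∧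
    (∑ k, ((Real.sqrt ((p0 k - p3 k) / Q) : ℝ) : ℂ) *
        (((p1 k : ℂ) + (p2 k : ℂ) * Complex.I) /
          ((Real.sqrt (Q * (p0 k - p3 k)) : ℝ) : ℂ)) = 0) := by
  have hu : ∀ k, √((p0 k - p3 k) / Q) ^ 2 = (p0 k - p3 k) / Q := fun k =>
    Real.sq_sqrt (div_nonneg (hpos k).le hQ.le)
  have hv : ∀ k, ‖((p1 k : ℂ) + (p2 k : ℂ) * I) / (√(Q * (p0 k - p3 k)) : ℂ)‖ ^ 2 =
      (p0 k + p3 k) / Q := fun k => by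
    rw [sq_norm_div_ofReal_sqrt _ (mul_pos hQ (hpos k)).le, normSq_add_mul_I,
      transverse_sq_eq_of_massless (hmass k), mul_div_mul_right _ _ (hpos k).ne']
  have huv : ∀ k, (√((p0 k - p3 k) / Q) : ℂ) *
      (((p1 k : ℂ) + (p2 k : ℂ) * I) / (√(Q * (p0 k - p3 k)) : ℂ)) =
      ((p1 k : ℂ) + (p2 k : ℂ) * I) / Q := fun k =>
    ofReal_sqrt_div_mul_div_sqrt_mul _ (hpos k) hQ
  simp only [hu, hv, huv, ← sum_div]
  refine ⟨?_, ?_, ?_⟩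
  · rw [sum_sub_distrib, hsum0, hsum3, sub_zero, div_self hQ.ne']
  · rw [sum_add_distrib, hsum0, hsum3, add_zero, div_self hQ.ne']
  · rw [sum_add_distrib, ← sum_mul, ← ofReal_sum, ← ofReal_sum, hsum1, hsum2]
    simp

/-- The spinor-derived coordinates u and v on massless N-body phase space in the
center-of-mass frame are unit vectors and orthogonal. -/
theorem phase_space_coords_CM (N : ℕ) (hN : 1 ≤ N) (Q : ℝ) (hQ : 0 < Q)
    (p0 p1 p2 p3 : Fin N → ℝ)
    (hmass : ∀ k, (p0 k) ^ 2 = (p1 k) ^ 2 + (p2 k) ^ 2 + (p3 k) ^ 2)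
    (hpos : ∀ k, 0 < p0 k - p3 k)
    (hsum0 : ∑ k, p0 k = Q) (hsum1 : ∑ k, p1 k = 0)
    (hsum2 : ∑ k, p2 k = 0) (hsum3 : ∑ k, p3 k = 0) :
    (∑ k, (Real.sqrt ((p0 k - p3 k) / Q)) ^ 2 = 1) ∧
    (∑ k, ‖((p1 k : ℂ) + (p2 k : ℂ) * Complex.I) /
        ((Real.sqrt (Q * (p0 k - p3 k)) : ℝ) : ℂ)‖ ^ 2 = 1) ∧
    (∑ k, ((Real.sqrt ((p0 k - p3 k) / Q) : ℝ) : ℂ) *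
        (((p1 k : ℂ) + (p2 k : ℂ) * Complex.I) /
          ((Real.sqrt (Q * (p0 k - p3 k)) : ℝ) : ℂ)) = 0) :=
  phase_space_coords_CM_general N Q hQ p0 p1 p2 p3 hmass hpos hsum0 hsum1 hsum2 hsum3
end

section
/- Let n ≥ 1, let w ∈ (0,1) be real, and let u ∈ ℝⁿ satisfy Σ_{i=1}^n u_i² = 1 − w². Define the n×n real matrix A by A_{ij} = (1/w)·(u_i·u_j/(1+w) + w·δ_{ij}). Then for every v ∈ ℂⁿ, writing v_N = −(1/w)·Σ_{i=1}^n u_i·v_i, one has Σ_{k=1}^n |(A v)_k|² = Σ_{i=1}^n |v_i|² + |v_N|², where (A v)_k = Σ_j A_{kj} v_j. -/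
/-! Writing `c = 1 / (w (1 + w))` and `S = ∑ uᵢ vᵢ`, the matrix is the rank-one update
`A = 1 + c u uᵀ`, so `(A v)ₖ = vₖ + c uₖ S` and
`‖A v‖² = ‖v‖² + (2c + c² ‖u‖²) |S|²`. With `‖u‖² = 1 - w²` the coefficient collapses to
`1 / w²`, and `|S|² / w² = |v_N|²`. -/

open Finset ComplexConjugate

lemma sum_ofReal_mul_eq_add_of_apply_eq {ι : Type*} [Fintype ι] [DecidableEq ι]
    (A : Matrix ι ι ℝ) (u : ι → ℝ) (c : ℝ)
    (hA : ∀ i j, A i j = (if i = j then 1 else 0) + c * u i * u j) (v : ι → ℂ) (k : ι) :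
    ∑ j, (A k j : ℂ) * v j = v k + c * u k * ∑ j, u j * v j := by
  simp only [hA, Complex.ofReal_add, Complex.ofReal_mul, apply_ite Complex.ofReal,
    Complex.ofReal_one, Complex.ofReal_zero, add_mul, ite_mul, one_mul, zero_mul, sum_add_distrib,
    sum_ite_eq, mem_univ, if_true, mul_sum, mul_assoc]

lemma sum_norm_sq_add_mul_sum {ι : Type*} [Fintype ι] (u : ι → ℝ) (v : ι → ℂ) (c : ℝ) :
    ∑ k, ‖v k + c * u k * ∑ i, u i * v i‖ ^ 2
      = ∑ k, ‖v k‖ ^ 2 + (2 * c + c ^ 2 * ∑ k, u k ^ 2) * ‖∑ i, u i * v i‖ ^ 2 := by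
  set S := ∑ i, (u i : ℂ) * v i
  have hcross : ∑ k, (v k * conj (c * u k * S)).re = c * ‖S‖ ^ 2 := by
    calc ∑ k, (v k * conj (c * u k * S)).re
        = (c * ((∑ k, u k * v k) * conj S)).re := by
          rw [← Complex.re_sum, sum_mul, mul_sum]
          simp only [map_mul, Complex.conj_ofReal]
          exact congrArg _ (sum_congr rfl fun k _ => by ring)
      _ = c * ‖S‖ ^ 2 := by
          rw [Complex.mul_conj, ← Complex.ofReal_mul, Complex.ofReal_re, Complex.normSq_eq_norm_sq]
  have hk : ∀ k, ‖v k + c * u k * S‖ ^ 2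
      = ‖v k‖ ^ 2 + c ^ 2 * u k ^ 2 * ‖S‖ ^ 2 + 2 * (v k * conj (c * u k * S)).re := by
    intro k
    simp only [Complex.sq_norm, Complex.normSq_add, Complex.normSq_mul, Complex.normSq_ofReal]
    ring
  rw [sum_congr rfl fun k _ => hk k, sum_add_distrib, sum_add_distrib, ← mul_sum _ _ (2 : ℝ),
    hcross, ← sum_mul, ← mul_sum]
  ring

lemma norm_sq_neg_inv_mul (w : ℝ) (z : ℂ) : ‖-(1 / (w : ℂ)) * z‖ ^ 2 = ‖z‖ ^ 2 / w ^ 2 := by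
  rw [norm_mul, norm_neg, one_div, norm_inv, Complex.norm_real, Real.norm_eq_abs, mul_pow,
    inv_pow, sq_abs]
  ring

theorem change_of_vars_norm_general (n : ℕ) (w : ℝ) (hw : w ∈ Set.Ioo (0 : ℝ) 1)
    (u : Fin n → ℝ) (hu : ∑ i, (u i) ^ 2 = 1 - w ^ 2)
    (A : Matrix (Fin n) (Fin n) ℝ)
    (hA : ∀ i j, A i j = (1 / w) * (u i * u j / (1 + w) + w * (if i = j then 1 else 0)))
    (v : Fin n → ℂ) (vN : ℂ)
    (hvN : vN = -(1 / (w : ℂ)) * ∑ i, (u i : ℂ) * v i) :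
    ∑ k, ‖∑ j, ((A k j : ℝ) : ℂ) * v j‖ ^ 2
      = (∑ i, ‖v i‖ ^ 2) + ‖vN‖ ^ 2 := by
  have hw0 : w ≠ 0 := hw.1.ne'
  have hw1 : 1 + w ≠ 0 := by linarith [hw.1]
  set c := 1 / (w * (1 + w)) with hc
  have hA_rankOne : ∀ i j, A i j = (if i = j then 1 else 0) + c * u i * u j := fun i j => by
    rw [hA, hc]
    field_simp
    ring
  have hcoef : 2 * c + c ^ 2 * (1 - w ^ 2) = 1 / w ^ 2 := by
    rw [hc]
    field_simp
    ring
  simp only [sum_ofReal_mul_eq_add_of_apply_eq A u c hA_rankOne v]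
  rw [sum_norm_sq_add_mul_sum, hu, hcoef, hvN, norm_sq_neg_inv_mul]
  ring

/-- The change-of-variables matrix A maps the constrained vector v to a vector v' whose
squared norm equals |v|² + |v_N|², where v_N is fixed by the orthogonality constraint. -/
theorem change_of_vars_norm (n : ℕ) (hn : 1 ≤ n) (w : ℝ) (hw : w ∈ Set.Ioo (0 : ℝ) 1)
    (u : Fin n → ℝ) (hu : ∑ i, (u i) ^ 2 = 1 - w ^ 2)
    (A : Matrix (Fin n) (Fin n) ℝ)
    (hA : ∀ i j, A i j = (1 / w) * (u i * u j / (1 + w) + w * (if i = j then 1 else 0)))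
    (v : Fin n → ℂ) (vN : ℂ)
    (hvN : vN = -(1 / (w : ℂ)) * ∑ i, (u i : ℂ) * v i) :
    ∑ k, ‖∑ j, ((A k j : ℝ) : ℂ) * v j‖ ^ 2
      = (∑ i, ‖v i‖ ^ 2) + ‖vN‖ ^ 2 :=
  change_of_vars_norm_general n w hw u hu A hA v vN hvN
end

section
/- Let n ≥ 1 and let a, b, c be unit vectors in the complex inner product space ℂⁿ (EuclideanSpace ℂ (Fin n)) with inner product ⟨·,·⟩. Then Real.arccos(|⟨a,c⟩|) ≤ Real.arccos(|⟨a,b⟩|) + Real.arccos(|⟨b,c⟩|). -/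
/-!
Multiplying `b` and `c` by suitable unit scalars makes `⟪a, b⟫` and `⟪b, c⟫` real and
nonnegative, which does not change any of the three quantities. Then `arccos ‖⟪a, b⟫‖` and
`arccos ‖⟪b, c⟫‖` are angles in the underlying real inner product space, and since
`re ⟪a, c⟫ ≤ ‖⟪a, c⟫‖`, the triangle inequality for real angles gives the claim.
-/

open Real InnerProductGeometry

section
variable {𝕜 E : Type*} [RCLike 𝕜] [NormedAddCommGroup E] [InnerProductSpace 𝕜 E]

-- `angle` is taken in `E` as a real inner product space, with `⟪x, y⟫_ℝ = re ⟪x, y⟫_𝕜`.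
attribute [local instance] InnerProductSpace.rclikeToReal

variable (𝕜) in
noncomputable def fubiniStudyAngle (x y : E) : ℝ :=
  arccos (‖inner 𝕜 x y‖ / (‖x‖ * ‖y‖))

variable {x y z : E} {u : 𝕜}

theorem fubiniStudyAngle_smul_left (hu : u ≠ 0) :
    fubiniStudyAngle 𝕜 (u • x) y = fubiniStudyAngle 𝕜 x y := by
  have hu' : ‖u‖ ≠ 0 := norm_ne_zero_iff.mpr hu
  simp only [fubiniStudyAngle, inner_smul_left, norm_mul, RCLike.norm_conj, norm_smul, mul_assoc,
    mul_div_mul_left _ _ hu']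

theorem fubiniStudyAngle_smul_right (hu : u ≠ 0) :
    fubiniStudyAngle 𝕜 x (u • y) = fubiniStudyAngle 𝕜 x y := by
  have hu' : ‖u‖ ≠ 0 := norm_ne_zero_iff.mpr hu
  simp only [fubiniStudyAngle, inner_smul_right, norm_mul, norm_smul, mul_left_comm ‖x‖,
    mul_div_mul_left _ _ hu']

theorem fubiniStudyAngle_le_angle (x y : E) : fubiniStudyAngle 𝕜 x y ≤ angle x y :=
  arccos_le_arccos <| div_le_div_of_nonneg_right (RCLike.re_le_norm _) (by positivity)

theorem exists_angle_smul_eq_fubiniStudyAngle (x y : E) :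
    ∃ u : 𝕜, u ≠ 0 ∧ angle x (u • y) = fubiniStudyAngle 𝕜 x y := by
  obtain ⟨u, hu, hphase⟩ := RCLike.exists_norm_eq_mul_self (inner 𝕜 x y)
  have hu0 : u ≠ 0 := by rintro rfl; simp at hu
  have hreal : inner 𝕜 x (u • y) = (‖inner 𝕜 x (u • y)‖ : 𝕜) := by
    rw [inner_smul_right, ← hphase, RCLike.norm_ofReal, abs_norm]
  refine ⟨u, hu0, ?_⟩
  rw [← fubiniStudyAngle_smul_right hu0, angle, fubiniStudyAngle, real_inner_eq_re_inner 𝕜, hreal,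
    RCLike.ofReal_re, RCLike.norm_ofReal, abs_norm]

theorem fubiniStudyAngle_le_add (x y z : E) :
    fubiniStudyAngle 𝕜 x z ≤ fubiniStudyAngle 𝕜 x y + fubiniStudyAngle 𝕜 y z := by
  obtain ⟨u, hu, hxy⟩ := exists_angle_smul_eq_fubiniStudyAngle (𝕜 := 𝕜) x y
  obtain ⟨v, hv, hyz⟩ := exists_angle_smul_eq_fubiniStudyAngle (𝕜 := 𝕜) (u • y) z
  calc fubiniStudyAngle 𝕜 x z = fubiniStudyAngle 𝕜 x (v • z) :=
        (fubiniStudyAngle_smul_right hv).symm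
    _ ≤ angle x (v • z) := fubiniStudyAngle_le_angle x (v • z)
    _ ≤ angle x (u • y) + angle (u • y) (v • z) := angle_le_angle_add_angle _ _ _
    _ = fubiniStudyAngle 𝕜 x y + fubiniStudyAngle 𝕜 y z := by
      rw [hxy, hyz, fubiniStudyAngle_smul_left hu]

end

theorem arccos_abs_inner_triangle_general (n : ℕ)
    (a b c : EuclideanSpace ℂ (Fin n))
    (ha : ‖a‖ = 1) (hb : ‖b‖ = 1) (hc : ‖c‖ = 1) :
    Real.arccos (‖(inner ℂ a c : ℂ)‖) ≤
      Real.arccos (‖(inner ℂ a b : ℂ)‖) + Real.arccos (‖(inner ℂ b c : ℂ)‖) := by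
  simpa [fubiniStudyAngle, ha, hb, hc] using fubiniStudyAngle_le_add (𝕜 := ℂ) a b c

/-- Triangle inequality for the Fubini–Study distance arccos|⟨·,·⟩| between unit
vectors of ℂⁿ. -/
theorem arccos_abs_inner_triangle (n : ℕ) (hn : 1 ≤ n)
    (a b c : EuclideanSpace ℂ (Fin n))
    (ha : ‖a‖ = 1) (hb : ‖b‖ = 1) (hc : ‖c‖ = 1) :
    Real.arccos (‖(inner ℂ a c : ℂ)‖) ≤
      Real.arccos (‖(inner ℂ a b : ℂ)‖) + Real.arccos (‖(inner ℂ b c : ℂ)‖) :=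
  arccos_abs_inner_triangle_general n a b c ha hb hc
end

section
/- Let n ≥ 1 and let a, b be unit vectors in the complex inner product space ℂⁿ (EuclideanSpace ℂ (Fin n)). Define d(a,b) = Real.arccos(max(|⟨a,b⟩|, |⟨a, conj b⟩|)), where conj b denotes componentwise complex conjugation. Then d is symmetric, d(a,a) = 0, and d satisfies the triangle inequality: d(a,c) ≤ d(a,b) + d(b,c) for all unit vectors a, b, c. -/
/-!
For unit vectors `x, y` of a complex inner product space, `arccos ‖⟪x, y⟫‖` is the Fubini–Study
distance between the lines they span. Its triangle inequality comes from the triangle inequality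
for angles in the underlying real inner product space: after rotating the phases of `y` and `z`
so that `⟪x, y⟫` and `⟪y, z⟫` are real and nonnegative, the two real angles equal the
Fubini–Study distances, while the real angle between `x` and `z` only dominates
`arccos ‖⟪x, z⟫‖`. The distance `hsDist a c` is the minimum of the Fubini–Study distances from
`a` to `c` and to `conj c`; conjugation is an isometry, so the triangle inequality passes to
the minimum.
-/

/-- Componentwise complex conjugation of a vector in ℂⁿ (the action of the azimuthal
reflection p_y → -p_y on the hypersphere coordinates). -/
noncomputable def conjVec (n : ℕ) (b : EuclideanSpace ℂ (Fin n)) : EuclideanSpace ℂ (Fin n) :=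
  WithLp.toLp 2 (fun i => (starRingEnd ℂ) (b i))

/-- The hypersphere distance minimized over azimuthal rotations and reflections. -/
noncomputable def hsDist (n : ℕ) (a b : EuclideanSpace ℂ (Fin n)) : ℝ :=
  Real.arccos (max (‖(inner ℂ a b : ℂ)‖) (‖(inner ℂ a (conjVec n b) : ℂ)‖))

open Real InnerProductGeometry ComplexConjugate
open scoped InnerProductSpace

section FubiniStudy

variable {𝕜 E : Type*} [RCLike 𝕜] [NormedAddCommGroup E] [InnerProductSpace 𝕜 E]

variable (𝕜) in
noncomputable def fubiniStudyDist (x y : E) : ℝ := arccos ‖⟪x, y⟫_𝕜‖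

lemma fubiniStudyDist_comm (x y : E) : fubiniStudyDist 𝕜 x y = fubiniStudyDist 𝕜 y x := by
  rw [fubiniStudyDist, fubiniStudyDist, norm_inner_symm]

lemma fubiniStudyDist_self {x : E} (hx : ‖x‖ = 1) : fubiniStudyDist 𝕜 x x = 0 := by
  rw [fubiniStudyDist, inner_self_eq_norm_sq_to_K, hx]
  simp

lemma fubiniStudyDist_smul_right (x y : E) {c : 𝕜} (hc : ‖c‖ = 1) :
    fubiniStudyDist 𝕜 x (c • y) = fubiniStudyDist 𝕜 x y := by
  rw [fubiniStudyDist, fubiniStudyDist, inner_smul_right, norm_mul, hc, one_mul]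

lemma fubiniStudyDist_smul_left (x y : E) {c : 𝕜} (hc : ‖c‖ = 1) :
    fubiniStudyDist 𝕜 (c • x) y = fubiniStudyDist 𝕜 x y := by
  rw [fubiniStudyDist_comm, fubiniStudyDist_smul_right _ _ hc, fubiniStudyDist_comm]

lemma fubiniStudyDist_le_angle {x y : E} (hx : ‖x‖ = 1) (hy : ‖y‖ = 1) :
    letI := InnerProductSpace.rclikeToReal 𝕜 E
    fubiniStudyDist 𝕜 x y ≤ angle x y := by
  let := InnerProductSpace.rclikeToReal 𝕜 E
  rw [angle, real_inner_eq_re_inner 𝕜, hx, hy, mul_one, div_one]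
  exact antitone_arccos (RCLike.re_le_norm _)

lemma exists_angle_smul_eq_fubiniStudyDist {x y : E} (hx : ‖x‖ = 1) (hy : ‖y‖ = 1) :
    letI := InnerProductSpace.rclikeToReal 𝕜 E
    ∃ c : 𝕜, ‖c‖ = 1 ∧ angle x (c • y) = fubiniStudyDist 𝕜 x y := by
  let := InnerProductSpace.rclikeToReal 𝕜 E
  obtain ⟨c, hc, hcxy⟩ := RCLike.exists_norm_eq_mul_self ⟪x, y⟫_𝕜
  refine ⟨c, hc, ?_⟩
  rw [angle, real_inner_eq_re_inner 𝕜, inner_smul_right, ← hcxy, RCLike.ofReal_re, hx,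
    norm_smul, hc, hy]
  simp [fubiniStudyDist]

theorem fubiniStudyDist_triangle {x y z : E} (hx : ‖x‖ = 1) (hy : ‖y‖ = 1) (hz : ‖z‖ = 1) :
    fubiniStudyDist 𝕜 x z ≤ fubiniStudyDist 𝕜 x y + fubiniStudyDist 𝕜 y z := by
  let := InnerProductSpace.rclikeToReal 𝕜 E
  obtain ⟨c, hc, hxy⟩ := exists_angle_smul_eq_fubiniStudyDist (𝕜 := 𝕜) hx hy
  have hcy : ‖c • y‖ = 1 := by rw [norm_smul, hc, hy, one_mul]
  obtain ⟨d, hd, hyz⟩ := exists_angle_smul_eq_fubiniStudyDist (𝕜 := 𝕜) hcy hz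
  have hdz : ‖d • z‖ = 1 := by rw [norm_smul, hd, hz, one_mul]
  calc fubiniStudyDist 𝕜 x z = fubiniStudyDist 𝕜 x (d • z) :=
        (fubiniStudyDist_smul_right x z hd).symm
    _ ≤ angle x (d • z) := fubiniStudyDist_le_angle hx hdz
    _ ≤ angle x (c • y) + angle (c • y) (d • z) := angle_le_angle_add_angle _ _ _
    _ = fubiniStudyDist 𝕜 x y + fubiniStudyDist 𝕜 y z := by
        rw [hxy, hyz, fubiniStudyDist_smul_left y z hc]

end FubiniStudy

section HypersphereDistance

variable {n : ℕ}

lemma conjVec_conjVec (b : EuclideanSpace ℂ (Fin n)) : conjVec n (conjVec n b) = b := by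
  ext i; simp [conjVec]

lemma norm_conjVec (b : EuclideanSpace ℂ (Fin n)) : ‖conjVec n b‖ = ‖b‖ := by
  simp [EuclideanSpace.norm_eq, conjVec]

lemma inner_conjVec_conjVec (a b : EuclideanSpace ℂ (Fin n)) :
    inner ℂ (conjVec n a) (conjVec n b) = conj (inner ℂ a b) := by
  simp [PiLp.inner_apply, conjVec, map_sum, mul_comm]

lemma fubiniStudyDist_conjVec_conjVec (a b : EuclideanSpace ℂ (Fin n)) :
    fubiniStudyDist ℂ (conjVec n a) (conjVec n b) = fubiniStudyDist ℂ a b := by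
  rw [fubiniStudyDist, fubiniStudyDist, inner_conjVec_conjVec, RCLike.norm_conj]

lemma fubiniStudyDist_conjVec_left (a b : EuclideanSpace ℂ (Fin n)) :
    fubiniStudyDist ℂ (conjVec n a) b = fubiniStudyDist ℂ a (conjVec n b) := by
  rw [← fubiniStudyDist_conjVec_conjVec, conjVec_conjVec]

lemma hsDist_eq_min (a b : EuclideanSpace ℂ (Fin n)) :
    hsDist n a b = min (fubiniStudyDist ℂ a b) (fubiniStudyDist ℂ a (conjVec n b)) :=
  antitone_arccos.map_max

lemma hsDist_comm (a b : EuclideanSpace ℂ (Fin n)) : hsDist n a b = hsDist n b a := by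
  rw [hsDist_eq_min, hsDist_eq_min, fubiniStudyDist_comm a, fubiniStudyDist_comm a,
    fubiniStudyDist_conjVec_left]

lemma hsDist_self {a : EuclideanSpace ℂ (Fin n)} (ha : ‖a‖ = 1) : hsDist n a a = 0 := by
  rw [hsDist_eq_min, fubiniStudyDist_self ha]
  exact min_eq_left (arccos_nonneg _)

lemma hsDist_conjVec_left (a b : EuclideanSpace ℂ (Fin n)) :
    hsDist n (conjVec n a) b = hsDist n a b := by
  rw [hsDist_eq_min, hsDist_eq_min, fubiniStudyDist_conjVec_left, fubiniStudyDist_conjVec_left,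
    conjVec_conjVec, min_comm]

lemma hsDist_le_fubiniStudyDist_add_hsDist {a b c : EuclideanSpace ℂ (Fin n)} (ha : ‖a‖ = 1)
    (hb : ‖b‖ = 1) (hc : ‖c‖ = 1) :
    hsDist n a c ≤ fubiniStudyDist ℂ a b + hsDist n b c := by
  have hc' : ‖conjVec n c‖ = 1 := by rw [norm_conjVec, hc]
  rw [hsDist_eq_min, hsDist_eq_min, ← min_add_add_left]
  exact min_le_min (fubiniStudyDist_triangle ha hb hc) (fubiniStudyDist_triangle ha hb hc')

theorem hsDist_triangle {a b c : EuclideanSpace ℂ (Fin n)} (ha : ‖a‖ = 1) (hb : ‖b‖ = 1)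
    (hc : ‖c‖ = 1) : hsDist n a c ≤ hsDist n a b + hsDist n b c := by
  have hb' : ‖conjVec n b‖ = 1 := by rw [norm_conjVec, hb]
  rw [hsDist_eq_min a b, min_add]
  refine le_min (hsDist_le_fubiniStudyDist_add_hsDist ha hb hc) ?_
  rw [← hsDist_conjVec_left b c]
  exact hsDist_le_fubiniStudyDist_add_hsDist ha hb' hc

end HypersphereDistance

theorem hsDist_is_metric_general (n : ℕ) :
    (∀ a b : EuclideanSpace ℂ (Fin n), ‖a‖ = 1 → ‖b‖ = 1 → hsDist n a b = hsDist n b a) ∧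
    (∀ a : EuclideanSpace ℂ (Fin n), ‖a‖ = 1 → hsDist n a a = 0) ∧
    (∀ a b c : EuclideanSpace ℂ (Fin n), ‖a‖ = 1 → ‖b‖ = 1 → ‖c‖ = 1 →
      hsDist n a c ≤ hsDist n a b + hsDist n b c) :=
  ⟨fun a b _ _ => hsDist_comm a b, fun _ => hsDist_self,
    fun _ _ _ => hsDist_triangle⟩

/-- The reflection-and-phase minimized hypersphere distance is symmetric, vanishes on the
diagonal, and satisfies the triangle inequality on unit vectors. -/
theorem hsDist_is_metric (n : ℕ) (hn : 1 ≤ n) :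
    (∀ a b : EuclideanSpace ℂ (Fin n), ‖a‖ = 1 → ‖b‖ = 1 → hsDist n a b = hsDist n b a) ∧
    (∀ a : EuclideanSpace ℂ (Fin n), ‖a‖ = 1 → hsDist n a a = 0) ∧
    (∀ a b c : EuclideanSpace ℂ (Fin n), ‖a‖ = 1 → ‖b‖ = 1 → ‖c‖ = 1 →
      hsDist n a c ≤ hsDist n a b + hsDist n b c) :=
  hsDist_is_metric_general n
end
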